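/- arXiv:1412.4213 — 7 statements merged into one kernel-verified Lean document; each statement's English description precedes it below -/
import Mathlib

section
/- Generalized analysis framework (Corollary 2): suppose scheduler X guarantees for every job J_i that its total satisfied time obeys t^S_i ≤ α·l_i and its total processor allocation obeys a^T_i ≤ β·w_i (with α, β ≥ 1). If whenever the last-completing job J_k is deprived all P processors are fully allocated (so t^D_k ≤ (Σ_i a^T_i)/P), then the makespan M = r_k + t^S_k + t^D_k is at most (α + β)·M*, given that M* ≥ r_k + l_k and M* ≥ (Σ_i w_i)/P. -/
/-- Corollary 2, generalized framework: if scheduler X guarantees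
t^S_i ≤ α·l_i and a^T_i ≤ β·w_i for every job (α, β ≥ 1), and the
last-completing job J_k has total deprived time t^D_k ≤ (Σ_i a^T_i)/P, then the
makespan r_k + t^S_k + t^D_k is at most (α + β)·M*, given M* ≥ r_k + l_k and
M* ≥ (Σ_i w_i)/P. -/
theorem stmt6 (n : ℕ) (w l r tS tD aT : Fin n → ℝ) (P α β Mstar : ℝ) (k : Fin n)
    (hP : 0 < P) (hα : 1 ≤ α) (hβ : 1 ≤ β)
    (hw : ∀ i, 0 < w i) (hl : ∀ i, 0 < l i) (hr : ∀ i, 0 ≤ r i)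
    (htS : ∀ i, tS i ≤ α * l i)
    (haT : ∀ i, aT i ≤ β * w i)
    (htD : tD k ≤ (∑ i, aT i) / P)
    (hM1 : r k + l k ≤ Mstar)
    (hM2 : (∑ i, w i) / P ≤ Mstar) :
    r k + tS k + tD k ≤ (α + β) * Mstar := by
  have h1 : r k + tS k ≤ α * Mstar := by
    have : r k + tS k ≤ α * (r k + l k) := by
      have := htS k
      have hrk := hr k
      nlinarith
    calc r k + tS k ≤ α * (r k + l k) := this
      _ ≤ α * Mstar := by
        apply mul_le_mul_of_nonneg_left hM1 (by linarith)
  have h2 : tD k ≤ β * Mstar := by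
    have hsum : (∑ i, aT i) ≤ β * ∑ i, w i := by
      rw [Finset.mul_sum]
      exact Finset.sum_le_sum fun i _ => haT i
    have : (∑ i, aT i) / P ≤ β * ((∑ i, w i) / P) := by
      rw [← mul_div_assoc]
      exact div_le_div_of_nonneg_right hsum hP.le
    have hb : β * ((∑ i, w i) / P) ≤ β * Mstar :=
      mul_le_mul_of_nonneg_left hM2 (by linarith)
    linarith
  linarith [h1, h2]
end

section
/- DEQ is efficient: if the sum of desires is at most the budget (Σ_{j∈N} d_j ≤ a), then DEQ allocates exactly a_j = d_j to every child j ∈ N, i.e., every child is satisfied. -/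
/-- The Dynamic Equi-partitioning (DEQ) allocation: distributes budget `a`
among the children in `N` with desires `d`: with equal share a/|N|, the set
S = {j ∈ N : d j ≤ a/|N|} of satisfiable children receive exactly their
desires and DEQ recurses on N \ S with the remaining budget; if S = ∅ every
child gets the equal share a/|N|. -/
noncomputable def DEQ {ι : Type*} [DecidableEq ι] (d : ι → ℝ) (N : Finset ι) (a : ℝ) : ι → ℝ :=
  if _hN : N = ∅ then fun _ => 0
  else
    let S := N.filter (fun j => d j ≤ a / N.card)
    if _hSe : S = ∅ then fun j => if j ∈ N then a / N.card else 0
    else fun j =>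
      if j ∈ S then d j
      else DEQ d (N \ S) (a - ∑ i ∈ S, d i) j
termination_by N.card
decreasing_by
  exact Finset.card_lt_card (Finset.sdiff_ssubset (Finset.filter_subset _ _)
    (Finset.nonempty_of_ne_empty _hSe))

lemma DEQ_aux {ι : Type*} [DecidableEq ι] (d : ι → ℝ) (hd : ∀ j, 0 ≤ d j) :
    ∀ (N : Finset ι) (a : ℝ), (∑ j ∈ N, d j ≤ a) → ∀ j ∈ N, DEQ d N a j = d j := by
  intro N
  induction N using Finset.strongInduction with
  | _ N ih =>
    intro a hsum j hj
    have hNne : N ≠ ∅ := Finset.ne_empty_of_mem hj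
    have hcard : (0:ℝ) < N.card := by
      have := Finset.card_pos.mpr (Finset.nonempty_of_ne_empty hNne)
      exact_mod_cast this
    set S := N.filter (fun j => d j ≤ a / N.card) with hSdef
    have hSne : S ≠ ∅ := by
      intro hS
      have hall : ∀ i ∈ N, a / N.card < d i := by
        intro i hi
        by_contra h
        push_neg at h
        have : i ∈ S := Finset.mem_filter.mpr ⟨hi, h⟩
        simp [hS] at this
      have hlt : ∑ _i ∈ N, (a / N.card) < ∑ i ∈ N, d i :=
        Finset.sum_lt_sum_of_nonempty (Finset.nonempty_of_ne_empty hNne) hall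
      rw [Finset.sum_const, nsmul_eq_mul] at hlt
      rw [mul_div_cancel₀ a (ne_of_gt hcard)] at hlt
      linarith
    rw [DEQ]
    rw [dif_neg hNne]
    simp only [← hSdef, dif_neg hSne]
    by_cases hjS : j ∈ S
    · rw [if_pos hjS]
    · rw [if_neg hjS]
      have hSsub : S ⊆ N := Finset.filter_subset _ _
      have hss : N \ S ⊂ N :=
        Finset.sdiff_ssubset hSsub (Finset.nonempty_of_ne_empty hSne)
      apply ih (N \ S) hss
      · rw [Finset.sum_sdiff_eq_sub hSsub]
        linarith
      · exact Finset.mem_sdiff.mpr ⟨hj, hjS⟩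

/-- DEQ is efficient: if the total desire is at most the budget,
every child receives exactly its desire, i.e., every child is satisfied. -/
theorem stmt9 {ι : Type*} [DecidableEq ι] (d : ι → ℝ) (N : Finset ι) (a : ℝ)
    (hd : ∀ j, 0 ≤ d j) (ha : 0 ≤ a)
    (hsum : ∑ j ∈ N, d j ≤ a) :
    ∀ j ∈ N, DEQ d N a j = d j := by
  exact DEQ_aux d hd N a hsum
end

section
/- DEQ never allocates more than a child's desire when the child's desire is at most the current equal share; more precisely, under DEQ every child j receives a_j ≤ max(d_j, a/|N|), and every satisfied child receives exactly its desire. -/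
lemma DEQ_le_desire {ι : Type*} [DecidableEq ι] (d : ι → ℝ) (hd : ∀ j, 0 ≤ d j) :
    ∀ (N : Finset ι) (a : ℝ) (j : ι), DEQ d N a j ≤ d j := by
  intro N
  induction N using Finset.strongInduction with
  | _ N ih =>
    intro a j
    rw [DEQ]
    by_cases hN : N = ∅
    · simp [hN, hd j]
    · simp only [hN, dif_neg, not_false_iff]
      set S := N.filter (fun j => d j ≤ a / N.card) with hS
      by_cases hSe : S = ∅
      · simp only [hSe, dif_pos]
        by_cases hjN : j ∈ N
        · simp only [hjN, if_pos]
          have : j ∉ S := by simp [hSe]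
          rw [hS, Finset.mem_filter] at this
          push_neg at this
          exact le_of_lt (this hjN)
        · simp [hjN, hd j]
      · simp only [hSe, dif_neg, not_false_iff]
        by_cases hjS : j ∈ S
        · simp [hjS]
        · simp only [hjS, if_neg, not_false_iff]
          exact ih (N \ S) (Finset.sdiff_ssubset (Finset.filter_subset _ _)
            (Finset.nonempty_of_ne_empty hSe)) _ j

/-- under DEQ every child j receives
a_j ≤ max(d_j, a/|N|), and every satisfied child receives exactly its desire. -/
theorem stmt10 {ι : Type*} [DecidableEq ι] (d : ι → ℝ) (N : Finset ι) (a : ℝ)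
    (hN : N.Nonempty) (hd : ∀ j, 0 ≤ d j) (ha : 0 ≤ a) :
    (∀ j ∈ N, DEQ d N a j ≤ max (d j) (a / N.card)) ∧
    (∀ j ∈ N, d j ≤ DEQ d N a j → DEQ d N a j = d j) := by
  constructor
  · intro j _
    exact le_trans (DEQ_le_desire d hd N a j) (le_max_left _ _)
  · intro j _ h
    exact le_antisymm (DEQ_le_desire d hd N a j) h
end

section
/- DEQ fairness: every child receives at least min(d_j, a/|N|) processors, i.e., a_j ≥ min(d_j, a/|N|) for every j ∈ N. -/
lemma deq_aux {ι : Type*} [DecidableEq ι] (d : ι → ℝ) (hd : ∀ j, 0 ≤ d j) :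
    ∀ N : Finset ι, ∀ a : ℝ, 0 ≤ a → ∀ j ∈ N, min (d j) (a / N.card) ≤ DEQ d N a j := by
  intro N
  induction N using Finset.strongInduction with
  | _ N ih =>
    intro a ha j hj
    have hNne : N ≠ ∅ := Finset.ne_empty_of_mem hj
    rw [DEQ]
    rw [dif_neg hNne]
    set S := N.filter (fun j => d j ≤ a / N.card) with hS
    by_cases hSe : S = ∅
    · rw [dif_pos hSe]
      simp only [if_pos hj]
      exact min_le_right _ _
    · rw [dif_neg hSe]
      by_cases hjS : j ∈ S
      · simp only [if_pos hjS]
        exact min_le_left _ _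
      · simp only [if_neg hjS]
        have hSsub : S ⊆ N := Finset.filter_subset _ _
        have hjN' : j ∈ N \ S := Finset.mem_sdiff.mpr ⟨hj, hjS⟩
        have hssub : N \ S ⊂ N :=
          Finset.sdiff_ssubset hSsub (Finset.nonempty_of_ne_empty hSe)
        have hncard : (0:ℝ) < N.card := by
          exact_mod_cast Finset.card_pos.mpr ⟨j, hj⟩
        have hmcard : (0:ℝ) < (N \ S).card := by
          exact_mod_cast Finset.card_pos.mpr ⟨j, hjN'⟩
        have hsum : ∑ i ∈ S, d i ≤ S.card * (a / N.card) := by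
          calc ∑ i ∈ S, d i ≤ ∑ _i ∈ S, (a / N.card) := by
                apply Finset.sum_le_sum
                intro i hi
                exact (Finset.mem_filter.mp hi).2
            _ = S.card * (a / N.card) := by
                rw [Finset.sum_const, nsmul_eq_mul]
        have hcardeq : ((N \ S).card : ℝ) = N.card - S.card := by
          rw [Finset.card_sdiff_of_subset hSsub]
          have := Finset.card_le_card hSsub
          push_cast [Nat.cast_sub this]
          ring
        have hkey : ((N \ S).card : ℝ) * (a / N.card) ≤ a - ∑ i ∈ S, d i := by
          rw [hcardeq]
          have : (N.card : ℝ) * (a / N.card) = a := by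
            field_simp
          nlinarith [hsum]
        have ha' : 0 ≤ a - ∑ i ∈ S, d i := by
          have h0 : 0 ≤ ((N \ S).card : ℝ) * (a / N.card) := by
            positivity
          linarith
        have hdiv : a / N.card ≤ (a - ∑ i ∈ S, d i) / (N \ S).card := by
          rw [le_div_iff₀ hmcard]
          linarith [hkey]
        calc min (d j) (a / N.card) ≤ min (d j) ((a - ∑ i ∈ S, d i) / (N \ S).card) :=
              min_le_min le_rfl hdiv
          _ ≤ DEQ d (N \ S) (a - ∑ i ∈ S, d i) j := ih _ hssub _ ha' j hjN'

/-- DEQ fairness: every child receives at least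
min(d_j, a/|N|) processors. -/
theorem stmt11 {ι : Type*} [DecidableEq ι] (d : ι → ℝ) (N : Finset ι) (a : ℝ)
    (hN : N.Nonempty) (hd : ∀ j, 0 ≤ d j) (ha : 0 ≤ a) :
    ∀ j ∈ N, min (d j) (a / N.card) ≤ DEQ d N a j := by
  exact fun j hj => deq_aux d hd N a ha j hj
end

section
/- In the DEQ recursion, the equal share is monotonically non-decreasing: if S = { j ∈ N : d_j ≤ a/|N| } is nonempty and S ≠ N, then the equal share in the recursive call satisfies (a − Σ_{j∈S} d_j)/|N \ S| ≥ a/|N|. -/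
/-- in the DEQ recursion, the equal share is monotonically
non-decreasing: if S = { j ∈ N : d_j ≤ a/|N| } is nonempty and S ≠ N, then
the equal share in the recursive call satisfies
(a − Σ_{j∈S} d_j)/|N \ S| ≥ a/|N|. -/
theorem stmt12 {ι : Type*} [DecidableEq ι] (d : ι → ℝ) (N : Finset ι) (a : ℝ)
    (hd : ∀ j, 0 ≤ d j)
    (S : Finset ι) (hS : S = N.filter (fun j => d j ≤ a / N.card))
    (hSne : S.Nonempty) (hSN : S ≠ N) :
    a / N.card ≤ (a - ∑ j ∈ S, d j) / (N \ S).card := by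
  have hSsub : S ⊆ N := by rw [hS]; exact Finset.filter_subset _ _
  have hNne : N.Nonempty := hSne.mono hSsub
  have hNpos : (0:ℝ) < N.card := by exact_mod_cast Finset.card_pos.mpr hNne
  have hssne : (N \ S).Nonempty := by
    obtain ⟨x, hxN, hxS⟩ := Finset.exists_of_ssubset (hSsub.ssubset_of_ne hSN)
    exact ⟨x, Finset.mem_sdiff.mpr ⟨hxN, hxS⟩⟩
  have hdiffpos : (0:ℝ) < (N \ S).card := by
    exact_mod_cast Finset.card_pos.mpr hssne
  have hcard : ((N \ S).card : ℝ) = N.card - S.card := by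
    rw [Finset.card_sdiff_of_subset hSsub]
    have := Finset.card_le_card hSsub
    push_cast [Nat.cast_sub this]
    ring
  have hsum : ∑ j ∈ S, d j ≤ S.card * (a / N.card) := by
    calc ∑ j ∈ S, d j ≤ ∑ j ∈ S, (a / N.card) := by
          apply Finset.sum_le_sum
          intro j hj
          rw [hS] at hj
          exact (Finset.mem_filter.mp hj).2
      _ = S.card * (a / N.card) := by rw [Finset.sum_const, nsmul_eq_mul]
  rw [le_div_iff₀ hdiffpos]
  have hN : a = N.card * (a / N.card) := by field_simp
  rw [hcard]
  nlinarith [hsum]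
end

section
/- DEQ exhausts the budget when some child is deprived: if after DEQ completes some child j is deprived (a_j < d_j), then Σ_{j∈N} a_j = a, i.e., all processors are allocated. -/
theorem stmt13_aux {ι : Type*} [DecidableEq ι] (d : ι → ℝ) (hd : ∀ j, 0 ≤ d j) :
    ∀ n (N : Finset ι), N.card ≤ n → N.Nonempty → ∀ a : ℝ, 0 ≤ a →
      (∃ j ∈ N, DEQ d N a j < d j) → ∑ j ∈ N, DEQ d N a j = a := by
  intro n
  induction n with
  | zero =>
    intro N hc hN
    rw [Nat.le_zero, Finset.card_eq_zero] at hc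
    exact absurd hc hN.ne_empty
  | succ n ih =>
    intro N hc hN a ha hdep
    have hNne : N ≠ ∅ := hN.ne_empty
    set S := N.filter (fun j => d j ≤ a / N.card) with hS
    by_cases hSe : S = ∅
    · have heq : ∀ j ∈ N, DEQ d N a j = a / N.card := by
        intro j hj
        rw [DEQ]
        simp only [hNne, dif_neg, ← hS, hSe, dif_pos, if_pos hj]
        simp [hj]
      rw [Finset.sum_congr rfl heq, Finset.sum_const, nsmul_eq_mul]
      have hc0 : (N.card : ℝ) ≠ 0 := by
        exact_mod_cast Finset.card_ne_zero.mpr hN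
      field_simp
    · have hScard : 0 < N.card := Finset.card_pos.mpr hN
      have hshare : 0 ≤ a / N.card := by positivity
      have hsum_le : ∑ i ∈ S, d i ≤ a := by
        calc ∑ i ∈ S, d i ≤ ∑ _i ∈ S, a / N.card :=
              Finset.sum_le_sum (fun i hi => (Finset.mem_filter.mp hi).2)
          _ = S.card * (a / N.card) := by rw [Finset.sum_const, nsmul_eq_mul]
          _ ≤ N.card * (a / N.card) := by
              apply mul_le_mul_of_nonneg_right _ hshare
              exact_mod_cast Finset.card_le_card (Finset.filter_subset _ _)
          _ = a := by
              field_simp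
      have ha' : 0 ≤ a - ∑ i ∈ S, d i := by linarith
      have hDEQ : ∀ j, DEQ d N a j =
          if j ∈ S then d j else DEQ d (N \ S) (a - ∑ i ∈ S, d i) j := by
        intro j
        rw [DEQ]
        simp only [hNne, dif_neg, ← hS, hSe, dif_neg, not_false_iff]
      obtain ⟨j, hjN, hjdep⟩ := hdep
      have hjS : j ∉ S := by
        intro hjS
        rw [hDEQ j, if_pos hjS] at hjdep
        exact lt_irrefl _ hjdep
      have hjNS : j ∈ N \ S := Finset.mem_sdiff.mpr ⟨hjN, hjS⟩
      have hcard : (N \ S).card ≤ n := by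
        have := Finset.card_lt_card (Finset.sdiff_ssubset (Finset.filter_subset _ _)
          (Finset.nonempty_of_ne_empty hSe))
        rw [← hS] at this
        omega
      have hdep' : ∃ k ∈ N \ S, DEQ d (N \ S) (a - ∑ i ∈ S, d i) k < d k := by
        refine ⟨j, hjNS, ?_⟩
        rwa [hDEQ j, if_neg hjS] at hjdep
      have hrec := ih (N \ S) hcard ⟨j, hjNS⟩ _ ha' hdep'
      have hsplit : ∑ k ∈ N \ S, DEQ d N a k + ∑ k ∈ S, DEQ d N a k = ∑ k ∈ N, DEQ d N a k :=
        Finset.sum_sdiff (Finset.filter_subset _ _)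
      have h1 : ∑ k ∈ S, DEQ d N a k = ∑ k ∈ S, d k :=
        Finset.sum_congr rfl fun k hk => by rw [hDEQ k, if_pos hk]
      have h2 : ∑ k ∈ N \ S, DEQ d N a k = a - ∑ i ∈ S, d i := by
        rw [Finset.sum_congr rfl fun k hk => by
          rw [hDEQ k, if_neg (Finset.mem_sdiff.mp hk).2]]
        exact hrec
      rw [← hsplit, h1, h2]
      ring

/-- DEQ exhausts the budget when some child is deprived: if
after DEQ completes some child j ∈ N is deprived (a_j < d_j), then
Σ_{j∈N} a_j = a. -/
theorem stmt13 {ι : Type*} [DecidableEq ι] (d : ι → ℝ) (N : Finset ι) (a : ℝ)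
    (hN : N.Nonempty) (hd : ∀ j, 0 ≤ d j) (ha : 0 ≤ a)
    (hdep : ∃ j ∈ N, DEQ d N a j < d j) :
    ∑ j ∈ N, DEQ d N a j = a := by
  exact stmt13_aux d hd N.card N le_rfl hN a ha hdep
end

section
/- If in a rooted tree with Desire-Sum aggregation and DEQ allocation the root is deprived in some quantum, then the full processor budget P is distributed down to the leaves: the sum of leaf allocations equals P. -/
/-- in a rooted tree with Desire-Sum aggregation and DEQ
allocation, if the root is deprived then the full processor budget P is
distributed down to the leaves: the sum of the leaf allocations equals P.
The DEQ allocation at each node (i) never over-allocates, (ii) allocates the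
entire received amount whenever the children's total desire exceeds it,
(iii) gives each child exactly its desire when the received amount is at least
the node's (aggregate) desire, and never gives a child more than its desire. -/
theorem stmt15 {V : Type*} [Fintype V] [DecidableEq V]
    (root : V) (parent : V → Option V) (childs : V → Finset V)
    (depth : V → ℕ) (desire recv : V → ℝ) (P : ℝ)
    (hchild : ∀ u v, u ∈ childs v ↔ parent u = some v)
    (hroot : parent root = none)
    (hreach : ∀ v, Relation.ReflTransGen (fun x y => parent x = some y) v root)
    (hdepth : ∀ u v, parent u = some v → depth u = depth v + 1)
    (hdnonneg : ∀ v, 0 ≤ desire v)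
    (hrnonneg : ∀ v, 0 ≤ recv v)
    -- Desire-Sum: internal nodes aggregate their children's desires
    (hsum : ∀ v, (childs v).Nonempty → desire v = ∑ u ∈ childs v, desire u)
    -- DEQ (i): never over-allocates
    (hover : ∀ v, ∑ u ∈ childs v, recv u ≤ recv v)
    -- DEQ (ii): distributes everything when the node is deprived
    (hfull : ∀ v, (childs v).Nonempty → recv v < desire v →
      ∑ u ∈ childs v, recv u = recv v)
    -- DEQ (iii): a satisfied node gives each child exactly its desire
    (hsat : ∀ v, desire v ≤ recv v → ∀ u ∈ childs v, recv u = desire u)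
    -- DEQ never gives a child more than the child's desire
    (hcap : ∀ v, ∀ u ∈ childs v, recv u ≤ desire u)
    -- the root receives the P processors and is deprived
    (hrecvroot : recv root = P)
    (hdep : recv root < desire root) :
    ∑ v ∈ Finset.univ.filter (fun v => childs v = ∅), recv v = P := by
  classical
  have hparent : ∀ v, v ≠ root → ∃ w, parent v = some w := by
    intro v hv
    rcases Relation.ReflTransGen.cases_head (hreach v) with h | ⟨w, hw, _⟩
    · exact absurd h hv
    · exact ⟨w, hw⟩
  have hle : ∀ v, recv v ≤ desire v := by
    intro v
    by_cases hv : v = root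
    · subst hv; exact hdep.le
    · obtain ⟨w, hw⟩ := hparent v hv
      exact hcap w v ((hchild v w).mpr hw)
  have hL : ∀ v, childs v ≠ ∅ → ∑ u ∈ childs v, recv u = recv v := by
    intro v hv
    have hne : (childs v).Nonempty := Finset.nonempty_iff_ne_empty.mpr hv
    rcases lt_or_eq_of_le (hle v) with h | h
    · exact hfull v hne h
    · calc ∑ u ∈ childs v, recv u = ∑ u ∈ childs v, desire u :=
            Finset.sum_congr rfl fun u hu => hsat v h.ge u hu
        _ = desire v := (hsum v hne).symm
        _ = recv v := h.symm
  have hdge : ∀ v, depth root ≤ depth v ∧ (v ≠ root → depth root < depth v) := by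
    intro v
    induction hreach v using Relation.ReflTransGen.head_induction_on with
    | refl => exact ⟨le_refl _, fun h => absurd rfl h⟩
    | head hab hbr ih =>
      rename_i a b
      have hd := hdepth a b hab
      have h1 := ih.1
      exact ⟨by omega, fun _ => by omega⟩
  have key : ∀ k, ∑ v ∈ Finset.univ.filter
      (fun v => (childs v = ∅ ∧ depth v < depth root + k) ∨ depth v = depth root + k),
      recv v = P := by
    intro k
    induction k with
    | zero =>
      have hset : Finset.univ.filter
          (fun v => (childs v = ∅ ∧ depth v < depth root + 0) ∨ depth v = depth root + 0)
          = {root} := by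
        ext v
        simp only [Finset.mem_filter, Finset.mem_univ, true_and, Finset.mem_singleton]
        constructor
        · rintro (⟨_, h⟩ | h)
          · have := (hdge v).1; omega
          · by_contra hv
            have := (hdge v).2 hv; omega
        · rintro rfl; right; omega
      rw [hset, Finset.sum_singleton, hrecvroot]
    | succ k ih =>
      set n := depth root + k with hn
      set K := Finset.univ.filter (fun v => childs v = ∅ ∧ depth v < n + 1) with hK
      set I := Finset.univ.filter (fun v => childs v ≠ ∅ ∧ depth v = n) with hI
      set N := Finset.univ.filter (fun v => depth v = n + 1) with hN
      have hB : Finset.univ.filter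
          (fun v => (childs v = ∅ ∧ depth v < n) ∨ depth v = n) = K ∪ I := by
        ext v
        simp only [hK, hI, Finset.mem_union, Finset.mem_filter, Finset.mem_univ, true_and]
        constructor
        · rintro (⟨h1, h2⟩ | h)
          · exact Or.inl ⟨h1, by omega⟩
          · by_cases hc : childs v = ∅
            · exact Or.inl ⟨hc, by omega⟩
            · exact Or.inr ⟨hc, h⟩
        · rintro (⟨h1, h2⟩ | ⟨h1, h2⟩)
          · rcases Nat.lt_succ_iff_lt_or_eq.mp h2 with h | h
            · exact Or.inl ⟨h1, h⟩
            · exact Or.inr h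
          · exact Or.inr h2
      have hA : Finset.univ.filter
          (fun v => (childs v = ∅ ∧ depth v < n + 1) ∨ depth v = n + 1) = K ∪ N := by
        ext v
        simp only [hK, hN, Finset.mem_union, Finset.mem_filter, Finset.mem_univ, true_and]
      have hKI : Disjoint K I := by
        rw [Finset.disjoint_left]
        intro v hv hv'
        simp only [hK, Finset.mem_filter] at hv
        simp only [hI, Finset.mem_filter] at hv'
        exact hv'.2.1 hv.2.1
      have hKN : Disjoint K N := by
        rw [Finset.disjoint_left]
        intro v hv hv'
        simp only [hK, Finset.mem_filter] at hv
        simp only [hN, Finset.mem_filter] at hv'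
        omega
      have hNI : N = I.biUnion childs := by
        ext u
        simp only [hN, hI, Finset.mem_biUnion, Finset.mem_filter, Finset.mem_univ, true_and]
        constructor
        · intro hu
          have hur : u ≠ root := by
            intro h; subst h; omega
          obtain ⟨w, hw⟩ := hparent u hur
          have hd := hdepth u w hw
          have hmem : u ∈ childs w := (hchild u w).mpr hw
          exact ⟨w, ⟨Finset.nonempty_iff_ne_empty.mp ⟨u, hmem⟩, by omega⟩, hmem⟩
        · rintro ⟨w, ⟨_, hwd⟩, hmem⟩
          have := hdepth u w ((hchild u w).mp hmem)
          omega
      have hPD : (I : Set V).PairwiseDisjoint childs := by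
        intro a ha b hb hab
        rw [Function.onFun, Finset.disjoint_left]
        intro u hua hub
        have h1 := (hchild u a).mp hua
        have h2 := (hchild u b).mp hub
        rw [h1] at h2
        exact hab (Option.some.injEq _ _ ▸ h2 : a = b)
      have hNsum : ∑ v ∈ N, recv v = ∑ v ∈ I, recv v := by
        rw [hNI, Finset.sum_biUnion hPD]
        refine Finset.sum_congr rfl fun w hw => ?_
        simp only [hI, Finset.mem_filter] at hw
        exact hL w hw.2.1
      rw [hB, Finset.sum_union hKI] at ih
      have : depth root + (k + 1) = n + 1 := by omega
      rw [this, hA, Finset.sum_union hKN, hNsum]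
      exact ih
  have hM : ∀ v : V, depth v ≤ Finset.univ.sup depth :=
    fun v => Finset.le_sup (Finset.mem_univ v)
  have := key (Finset.univ.sup depth + 1)
  have hset : Finset.univ.filter
      (fun v => (childs v = ∅ ∧ depth v < depth root + (Finset.univ.sup depth + 1))
        ∨ depth v = depth root + (Finset.univ.sup depth + 1))
      = Finset.univ.filter (fun v => childs v = ∅) := by
    ext v
    simp only [Finset.mem_filter, Finset.mem_univ, true_and]
    have := hM v
    constructor
    · rintro (⟨h, _⟩ | h)
      · exact h
      · omega
    · intro h; exact Or.inl ⟨h, by omega⟩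
  rw [hset] at this
  exact this
end
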